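/- arXiv:2206.15105 — 3 statements merged into one kernel-verified Lean document; each statement's English description precedes it below -/
import Mathlib

section
/- Let $k, m$ be natural numbers and let $I$ be a finite index set with nonnegative reals $c_i \in [0,1]$ and natural numbers $w_i$ for each $i \in I$. If $\sum_{i \in I} c_i \leq k$ and $\sum_{i \in I} w_i c_i \geq m$, then there is a subset $S \subseteq I$ with $|S| \leq k$ and $\sum_{i \in S} w_i \geq m$. -/
theorem weighted_averaging {ι : Type*} [DecidableEq ι] (I : Finset ι) (k m : ℕ)
    (c : ι → ℝ) (w : ι → ℕ)
    (hc : ∀ i ∈ I, c i ∈ Set.Icc (0:ℝ) 1)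
    (hk : ∑ i ∈ I, c i ≤ (k : ℝ))
    (hm : (m : ℝ) ≤ ∑ i ∈ I, (w i : ℝ) * c i) :
    ∃ S ⊆ I, S.card ≤ k ∧ m ≤ ∑ i ∈ S, w i := by
  induction I using Finset.strongInduction generalizing k m c with
  | _ I ih =>
  rcases I.eq_empty_or_nonempty with rfl | hI
  · refine ⟨∅, by simp, by simp, ?_⟩
    simp only [Finset.sum_empty] at hm ⊢
    exact_mod_cast hm
  obtain ⟨i, hiI, hmax⟩ := I.exists_max_image w hI
  have hci := hc i hiI
  rcases Nat.eq_zero_or_pos k with rfl | hkpos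
  · -- all c are zero
    have hsum0 : ∑ j ∈ I, c j = 0 :=
      le_antisymm (by exact_mod_cast hk) (Finset.sum_nonneg fun j hj => (hc j hj).1)
    have hzero : ∀ j ∈ I, c j = 0 :=
      (Finset.sum_eq_zero_iff_of_nonneg fun j hj => (hc j hj).1).mp hsum0
    have : (m : ℝ) ≤ 0 := by
      refine hm.trans_eq (Finset.sum_eq_zero fun j hj => ?_)
      rw [hzero j hj, mul_zero]
    exact ⟨∅, by simp, by simp, by exact_mod_cast this⟩
  obtain ⟨k', rfl⟩ : ∃ k', k = k' + 1 := ⟨k - 1, (Nat.succ_pred_eq_of_pos hkpos).symm⟩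
  rcases le_or_gt m (w i) with hmw | hmw
  · exact ⟨{i}, Finset.singleton_subset_iff.mpr hiI, by simp, by simpa using hmw⟩
  -- main case
  set I' := I.erase i with hI'
  have hI'sub : I' ⊂ I := Finset.erase_ssubset hiI
  set T := ∑ j ∈ I', c j with hT
  have hT0 : 0 ≤ T := Finset.sum_nonneg fun j hj => (hc j (Finset.mem_of_mem_erase hj)).1
  have hsplit : ∑ j ∈ I, c j = c i + T := (Finset.add_sum_erase I c hiI).symm
  have hwsplit : ∑ j ∈ I, (w j : ℝ) * c j = (w i : ℝ) * c i + ∑ j ∈ I', (w j : ℝ) * c j :=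
    (Finset.add_sum_erase I (fun j => (w j : ℝ) * c j) hiI).symm
  have hTk : T ≤ (k' : ℝ) + 1 - c i := by
    push_cast at hk; linarith [hsplit ▸ hk]
  -- choose scaling factor t
  obtain ⟨t, ht0, ht1, htT, htloss⟩ :
      ∃ t : ℝ, 0 ≤ t ∧ t ≤ 1 ∧ t * T ≤ (k' : ℝ) ∧ T - t * T ≤ 1 - c i := by
    rcases le_or_gt T (k' : ℝ) with h | h
    · rcases eq_or_lt_of_le hT0 with h0 | h0
      · exact ⟨0, le_refl _, zero_le_one, by simp [← h0], by simp [← h0]; linarith [hci.2]⟩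
      · exact ⟨1, zero_le_one, le_refl _, by linarith, by linarith [hci.2]⟩
    · have hTpos : 0 < T := lt_of_le_of_lt (Nat.cast_nonneg k') h
      refine ⟨(k' : ℝ) / T, by positivity, ?_, ?_, ?_⟩
      · rw [div_le_one hTpos]; linarith
      · rw [div_mul_cancel₀ _ hTpos.ne']
      · rw [div_mul_cancel₀ _ hTpos.ne']; linarith
  set c' : ι → ℝ := fun j => t * c j with hc'def
  have hc' : ∀ j ∈ I', c' j ∈ Set.Icc (0:ℝ) 1 := by
    intro j hj
    have hcj := hc j (Finset.mem_of_mem_erase hj)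
    constructor
    · exact mul_nonneg ht0 hcj.1
    · calc t * c j ≤ 1 * c j := mul_le_mul_of_nonneg_right ht1 hcj.1
        _ ≤ 1 := by linarith [hcj.2]
  have hk' : ∑ j ∈ I', c' j ≤ (k' : ℝ) := by
    rw [hc'def, ← Finset.mul_sum]; exact htT
  -- weighted sum bound
  have hwI' : ∑ j ∈ I', (w j : ℝ) * c j ≤ (w i : ℝ) * T := by
    rw [hT, Finset.mul_sum]
    refine Finset.sum_le_sum fun j hj => ?_
    have hcj := hc j (Finset.mem_of_mem_erase hj)
    have : (w j : ℝ) ≤ (w i : ℝ) := by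
      exact_mod_cast hmax j (Finset.mem_of_mem_erase hj)
    exact mul_le_mul_of_nonneg_right this hcj.1
  have hwI'nn : 0 ≤ ∑ j ∈ I', (w j : ℝ) * c j :=
    Finset.sum_nonneg fun j hj => mul_nonneg (Nat.cast_nonneg _) (hc j (Finset.mem_of_mem_erase hj)).1
  have hm' : ((m - w i : ℕ) : ℝ) ≤ ∑ j ∈ I', (w j : ℝ) * c' j := by
    have hcast : ((m - w i : ℕ) : ℝ) = (m : ℝ) - (w i : ℝ) := by
      have : w i ≤ m := hmw.le
      push_cast [Nat.cast_sub this]; ring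
    rw [hcast, hc'def]
    have hsum' : ∑ j ∈ I', (w j : ℝ) * (t * c j) = t * ∑ j ∈ I', (w j : ℝ) * c j := by
      rw [Finset.mul_sum]; congr 1; ext j; ring
    rw [hsum']
    have hloss : (1 - t) * ∑ j ∈ I', (w j : ℝ) * c j ≤ (w i : ℝ) * (1 - c i) := by
      calc (1 - t) * ∑ j ∈ I', (w j : ℝ) * c j ≤ (1 - t) * ((w i : ℝ) * T) :=
            mul_le_mul_of_nonneg_left hwI' (by linarith)
        _ = (w i : ℝ) * (T - t * T) := by ring
        _ ≤ (w i : ℝ) * (1 - c i) := mul_le_mul_of_nonneg_left htloss (Nat.cast_nonneg _)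
    have hmlow : (m : ℝ) - (w i : ℝ) * c i ≤ ∑ j ∈ I', (w j : ℝ) * c j := by
      linarith [hwsplit ▸ hm]
    nlinarith
  obtain ⟨S', hS'sub, hS'card, hS'sum⟩ := ih I' hI'sub k' (m - w i) c' hc' hk' hm'
  refine ⟨insert i S', ?_, ?_, ?_⟩
  · intro j hj
    rcases Finset.mem_insert.mp hj with rfl | hj
    · exact hiI
    · exact Finset.mem_of_mem_erase (hS'sub hj)
  · have hiS' : i ∉ S' := fun h => Finset.notMem_erase i I (hS'sub h)
    rw [Finset.card_insert_of_notMem hiS']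
    omega
  · have hiS' : i ∉ S' := fun h => Finset.notMem_erase i I (hS'sub h)
    rw [Finset.sum_insert hiS']
    omega
end

section
/- Let $(X,d)$ be a metric space, $C \subseteq X$ a finite set of clients, and $R : C \to [0,\infty)$. Define a greedy filtering: starting with $U = C$, repeatedly pick $j \in U$ minimizing $R(j)$, add $j$ to $\mathsf{Reps}$, and remove from $U$ all $v$ with $d(v,j) \leq 2R(v)$. Then the balls $\{B(j, R(j))\}_{j \in \mathsf{Reps}}$ are pairwise disjoint. -/
open scoped Classical

/-- Greedy filtering: while `U ≠ ∅`, pick `j ∈ U` with minimum `R j`, add it to the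
set of representatives, and remove from `U` every `v` with `d(v,j) ≤ 2 R(v)`
(in particular `j` itself, since `R j ≥ 0`). -/
noncomputable def greedyReps {X : Type*} [MetricSpace X] (R : X → ℝ)
    (U : Finset X) : Finset X :=
  if h : U.Nonempty then
    let j := (U.exists_min_image R h).choose
    insert j (greedyReps R ((U.erase j).filter (fun v => ¬ dist v j ≤ 2 * R v)))
  else ∅
termination_by U.card
decreasing_by
  have hj : (U.exists_min_image R h).choose ∈ U := (U.exists_min_image R h).choose_spec.1
  calc ((U.erase (U.exists_min_image R h).choose).filter
          (fun v => ¬ dist v (U.exists_min_image R h).choose ≤ 2 * R v)).card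
      ≤ (U.erase (U.exists_min_image R h).choose).card := Finset.card_filter_le _ _
    _ < U.card := Finset.card_erase_lt_of_mem hj

theorem greedy_key {X : Type*} [MetricSpace X] (R : X → ℝ) (U : Finset X) :
    greedyReps R U ⊆ U ∧
    ∀ a ∈ greedyReps R U, ∀ b ∈ greedyReps R U, a ≠ b → R a + R b < dist a b := by
  rw [greedyReps]
  by_cases h : U.Nonempty
  · simp only [dif_pos h]
    set j := (U.exists_min_image R h).choose with hjdef
    have hj : j ∈ U := (U.exists_min_image R h).choose_spec.1
    have hmin : ∀ v ∈ U, R j ≤ R v := (U.exists_min_image R h).choose_spec.2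
    set U' := (U.erase j).filter (fun v => ¬ dist v j ≤ 2 * R v) with hU'
    have hcard : U'.card < U.card :=
      lt_of_le_of_lt (Finset.card_filter_le _ _) (Finset.card_erase_lt_of_mem hj)
    obtain ⟨ihsub, ihsep⟩ := greedy_key R U'
    have hU'sub : U' ⊆ U := fun v hv =>
      Finset.erase_subset _ _ (Finset.mem_filter.mp hv).1
    have key : ∀ b ∈ greedyReps R U', R j + R b < dist b j := by
      intro b hb
      have hbU' : b ∈ U' := ihsub hb
      have hd : ¬ dist b j ≤ 2 * R b := (Finset.mem_filter.mp hbU').2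
      have : R j ≤ R b := hmin b (hU'sub hbU')
      nlinarith [not_le.mp hd]
    constructor
    · intro x hx
      rcases Finset.mem_insert.mp hx with rfl | hx
      · exact hj
      · exact hU'sub (ihsub hx)
    · intro a ha b hb hab
      rcases Finset.mem_insert.mp ha with rfl | ha
      · rcases Finset.mem_insert.mp hb with rfl | hb
        · exact absurd rfl hab
        · have := key b hb
          rw [dist_comm]
          linarith
      · rcases Finset.mem_insert.mp hb with rfl | hb
        · have := key a ha
          linarith
        · exact ihsep a ha b hb hab
  · simp [dif_neg h]
termination_by U.card
decreasing_by
  exact lt_of_le_of_lt (Finset.card_filter_le _ _) (Finset.card_erase_lt_of_mem hj)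

theorem greedy_filtering_balls_disjoint {X : Type*} [MetricSpace X]
    (C : Finset X) (R : X → ℝ) (hR : ∀ v ∈ C, 0 ≤ R v) :
    ∀ j ∈ greedyReps R C, ∀ j' ∈ greedyReps R C, j ≠ j' →
      Disjoint (Metric.closedBall j (R j)) (Metric.closedBall j' (R j')) := by
  intro j hj j' hj' hne
  have hsep := (greedy_key R C).2 j hj j' hj' hne
  rw [Set.disjoint_left]
  intro x hx hx'
  have h1 : dist x j ≤ R j := Metric.mem_closedBall.mp hx
  have h2 : dist x j' ≤ R j' := Metric.mem_closedBall.mp hx'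
  have := dist_triangle j x j'
  rw [dist_comm j x] at this
  linarith
end

section
/- Let $(X,d)$ be a metric space, $C \subseteq X$ finite, $S \subseteq X$ nonempty, and suppose $\{\mathsf{child}(j)\}_{j \in \mathsf{Reps}}$ is a partition of $C$ indexed by $\mathsf{Reps} \subseteq C$ such that $d(v,j) \leq 2R(v)$ for all $v \in \mathsf{child}(j)$, where $R(v) \leq 2 C_v$ for nonnegative reals $C_v$. Then $\sum_{v \in C} d(v,S) \leq \sum_{j \in \mathsf{Reps}} |\mathsf{child}(j)| \, d(j,S) + 4\sum_{v \in C} C_v$, where $d(v,S) = \min_{s \in S} d(v,s)$. -/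
theorem cost_transfer_lemma {X : Type*} [MetricSpace X]
    (C S Reps : Finset X) (hS : S.Nonempty) (hReps : Reps ⊆ C)
    (child : X → Finset X) (R Cv : X → ℝ)
    (hchild_sub : ∀ j ∈ Reps, child j ⊆ C)
    (hdisj : ∀ j ∈ Reps, ∀ j' ∈ Reps, j ≠ j' → Disjoint (child j) (child j'))
    (hcover : ∀ v ∈ C, ∃ j ∈ Reps, v ∈ child j)
    (hdist : ∀ j ∈ Reps, ∀ v ∈ child j, dist v j ≤ 2 * R v)
    (hR : ∀ v ∈ C, R v ≤ 2 * Cv v)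
    (hCv : ∀ v ∈ C, 0 ≤ Cv v) :
    ∑ v ∈ C, S.inf' hS (fun s => dist v s)
      ≤ ∑ j ∈ Reps, ((child j).card : ℝ) * S.inf' hS (fun s => dist j s)
        + 4 * ∑ v ∈ C, Cv v := by
  classical
  have hCeq : C = Reps.biUnion child := by
    ext v
    simp only [Finset.mem_biUnion]
    constructor
    · exact fun hv => hcover v hv
    · rintro ⟨j, hj, hv⟩; exact hchild_sub j hj hv
  have hsum : ∀ (f : X → ℝ), ∑ v ∈ C, f v = ∑ j ∈ Reps, ∑ v ∈ child j, f v := by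
    intro f
    rw [hCeq, Finset.sum_biUnion]
    intro j hj j' hj' hne
    exact hdisj j hj j' hj' hne
  rw [hsum (fun v => S.inf' hS (fun s => dist v s)), hsum Cv, Finset.mul_sum,
    ← Finset.sum_add_distrib]
  apply Finset.sum_le_sum
  intro j hj
  have : ∑ v ∈ child j, S.inf' hS (fun s => dist v s)
      ≤ ∑ v ∈ child j, (S.inf' hS (fun s => dist j s) + 4 * Cv v) := by
    apply Finset.sum_le_sum
    intro v hv
    have hvC : v ∈ C := hchild_sub j hj hv
    have h1 : S.inf' hS (fun s => dist v s) ≤ S.inf' hS (fun s => dist j s) + dist v j := by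
      obtain ⟨s, hs, hse⟩ := S.exists_mem_eq_inf' hS (fun s => dist j s)
      calc S.inf' hS (fun s => dist v s) ≤ dist v s := Finset.inf'_le _ hs
        _ ≤ dist v j + dist j s := dist_triangle v j s
        _ = S.inf' hS (fun s => dist j s) + dist v j := by rw [hse]; ring
    have h2 : dist v j ≤ 4 * Cv v := by
      calc dist v j ≤ 2 * R v := hdist j hj v hv
        _ ≤ 2 * (2 * Cv v) := by linarith [hR v hvC]
        _ = 4 * Cv v := by ring
    linarith
  calc ∑ v ∈ child j, S.inf' hS (fun s => dist v s)
      ≤ ∑ v ∈ child j, (S.inf' hS (fun s => dist j s) + 4 * Cv v) := this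
    _ = ((child j).card : ℝ) * S.inf' hS (fun s => dist j s) + 4 * ∑ v ∈ child j, Cv v := by
        rw [Finset.sum_add_distrib, Finset.sum_const, Finset.mul_sum, nsmul_eq_mul]
end
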